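/- arXiv:1801.10062 — 5 statements merged into one kernel-verified Lean document; each statement's English description precedes it below -/
import Mathlib

section
/- Let 0 < R₀ < R, let S = {x ∈ ℝ³ : |x| = R}, let y ∈ S, and let z⁽¹⁾, z⁽²⁾, z⁽³⁾ be three points on the tangent plane Σ(−y) = {z ∈ ℝ³ : z·y = −R²} with |z⁽ʲ⁾ + y| = ℓ for j = 1,2,3 that form the vertices of an equilateral triangle (i.e., |z⁽¹⁾−z⁽²⁾| = |z⁽²⁾−z⁽³⁾| = |z⁽¹⁾−z⁽³⁾| = ℓ√3). If ℓ ≥ ℓ* := 2R₀R/√(R²−R₀²), then S*(y) ⊆ S₊(z⁽¹⁾) ∪ S₊(z⁽²⁾) ∪ S₊(z⁽³⁾). (Lemma 1 of the paper.) -/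
/-- The closed illuminated region `S₊(z) = {x ∈ S : x·(z−x) ≥ 0}` on the sphere of radius `R`. -/
def Splus (R : ℝ) (z : EuclideanSpace ℝ (Fin 3)) : Set (EuclideanSpace ℝ (Fin 3)) :=
  {x | ‖x‖ = R ∧ 0 ≤ (inner ℝ x (z - x) : ℝ)}

/-- The shadow region `S*(y) = {x ∈ S : (−y)·(x−y) > |x−y|·√(R²−R₀²)}`. -/
def Sstar (R R₀ : ℝ) (y : EuclideanSpace ℝ (Fin 3)) : Set (EuclideanSpace ℝ (Fin 3)) :=
  {x | ‖x‖ = R ∧ ‖x - y‖ * Real.sqrt (R ^ 2 - R₀ ^ 2) < (inner ℝ (-y) (x - y) : ℝ)}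

set_option maxHeartbeats 1600000 in
/-- Lemma 1: if `z⁽¹⁾, z⁽²⁾, z⁽³⁾` lie on the tangent plane of `S` at `−y`, at distance `ℓ`
from `−y`, and form an equilateral triangle of side `ℓ√3`, and `ℓ ≥ ℓ* = 2R₀R/√(R²−R₀²)`,
then `S*(y) ⊆ S₊(z⁽¹⁾) ∪ S₊(z⁽²⁾) ∪ S₊(z⁽³⁾)`. -/
theorem stmt0 (R R₀ ℓ : ℝ) (hR₀ : 0 < R₀) (hR : R₀ < R)
    (y : EuclideanSpace ℝ (Fin 3)) (hy : ‖y‖ = R)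
    (z : Fin 3 → EuclideanSpace ℝ (Fin 3))
    (htangent : ∀ j, (inner ℝ (z j) y : ℝ) = -R ^ 2)
    (hdist : ∀ j, ‖z j + y‖ = ℓ)
    (htriangle : ∀ j j', j ≠ j' → ‖z j - z j'‖ = ℓ * Real.sqrt 3)
    (hℓ : ℓ ≥ 2 * R₀ * R / Real.sqrt (R ^ 2 - R₀ ^ 2)) :
    Sstar R R₀ y ⊆ Splus R (z 0) ∪ Splus R (z 1) ∪ Splus R (z 2) := by
  classical
  have hR' : (0:ℝ) < R := hR₀.trans hR
  have hR0 : R ≠ 0 := ne_of_gt hR'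
  have hcc : (0:ℝ) < R ^ 2 - R₀ ^ 2 := by nlinarith
  have hcs : Real.sqrt (R ^ 2 - R₀ ^ 2) ^ 2 = R ^ 2 - R₀ ^ 2 := Real.sq_sqrt hcc.le
  have hcpos : 0 < Real.sqrt (R ^ 2 - R₀ ^ 2) := Real.sqrt_pos.mpr hcc
  have hℓpos : 0 < ℓ := lt_of_lt_of_le (by positivity) hℓ
  have hℓ0 : ℓ ≠ 0 := ne_of_gt hℓpos
  have hℓc : 2 * R₀ * R ≤ ℓ * Real.sqrt (R ^ 2 - R₀ ^ 2) := by
    rw [ge_iff_le, div_le_iff₀ hcpos] at hℓ; exact hℓ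
  have hℓ2 : 4 * R₀ ^ 2 * R ^ 2 ≤ ℓ ^ 2 * (R ^ 2 - R₀ ^ 2) := by
    have hsq := mul_le_mul hℓc hℓc (by positivity) (mul_nonneg hℓpos.le hcpos.le)
    nlinarith [hsq, hcs]
  -- abstract the tangent vectors u j = z j + y
  obtain ⟨u, hu⟩ : ∃ u : Fin 3 → EuclideanSpace ℝ (Fin 3), ∀ j, u j = z j + y :=
    ⟨fun j => z j + y, fun _ => rfl⟩
  have hyy : (inner ℝ y y : ℝ) = R ^ 2 := by rw [real_inner_self_eq_norm_sq, hy]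
  have hunorm : ∀ j, ‖u j‖ = ℓ := fun j => by rw [hu j]; exact hdist j
  have huu : ∀ j, (inner ℝ (u j) (u j) : ℝ) = ℓ ^ 2 := fun j => by
    rw [real_inner_self_eq_norm_sq, hunorm j]
  have huy : ∀ j, (inner ℝ (u j) y : ℝ) = 0 := by
    intro j
    rw [hu j, inner_add_left, htangent j, hyy]; ring
  have hyu : ∀ j, (inner ℝ y (u j) : ℝ) = 0 := fun j => by
    rw [real_inner_comm]; exact huy j
  have huu' : ∀ j j', j ≠ j' → (inner ℝ (u j) (u j') : ℝ) = -(ℓ ^ 2) / 2 := by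
    intro j j' hne
    have hsub : u j - u j' = z j - z j' := by rw [hu j, hu j']; abel
    have h3 : ‖u j - u j'‖ ^ 2 = 3 * ℓ ^ 2 := by
      rw [hsub, htriangle j j' hne, mul_pow, Real.sq_sqrt (by norm_num : (0:ℝ) ≤ 3)]
      ring
    have hexp : ‖u j - u j'‖ ^ 2
        = ‖u j‖ ^ 2 - 2 * (inner ℝ (u j) (u j') : ℝ) + ‖u j'‖ ^ 2 := norm_sub_sq_real _ _
    rw [hunorm j, hunorm j'] at hexp
    linarith [h3, hexp]
  -- the three tangent vectors sum to zero
  have hVV : (inner ℝ (u 0 + u 1 + u 2) (u 0 + u 1 + u 2) : ℝ) = 0 := by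
    simp only [inner_add_left, inner_add_right]
    rw [huu 0, huu 1, huu 2, huu' 0 1 (by decide), huu' 0 2 (by decide),
      huu' 1 0 (by decide), huu' 1 2 (by decide), huu' 2 0 (by decide), huu' 2 1 (by decide)]
    ring
  have hV0 : u 0 + u 1 + u 2 = 0 := inner_self_eq_zero.mp hVV
  -- enter the shadow region
  intro x hx
  obtain ⟨hxR, hxlt⟩ := hx
  have hxx : (inner ℝ x x : ℝ) = R ^ 2 := by rw [real_inner_self_eq_norm_sq, hxR]
  set s : ℝ := inner ℝ x y with hs
  have hxy : (inner ℝ x y : ℝ) = s := hs.symm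
  have hyx : (inner ℝ y x : ℝ) = s := by rw [real_inner_comm]
  have hinner1 : (inner ℝ (-y) (x - y) : ℝ) = R ^ 2 - s := by
    rw [inner_neg_left, inner_sub_right, hyy, hyx]; ring
  have hd2 : ‖x - y‖ ^ 2 = 2 * R ^ 2 - 2 * s := by
    rw [norm_sub_sq_real, hxR, hy, hxy]; ring
  rw [hinner1] at hxlt
  have hd0 : 0 ≤ ‖x - y‖ := norm_nonneg _
  have hdpos : 0 < ‖x - y‖ := by
    rcases hd0.lt_or_eq with h | h
    · exact h
    · exfalso; rw [← h] at hxlt hd2; nlinarith [hxlt, hd2]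
  have h2c : 2 * Real.sqrt (R ^ 2 - R₀ ^ 2) < ‖x - y‖ := by
    nlinarith [hxlt, hd2, hdpos, hcpos]
  have hslt : s < 2 * R₀ ^ 2 - R ^ 2 := by
    nlinarith [mul_pos (sub_pos.mpr h2c)
      (show (0:ℝ) < ‖x - y‖ + 2 * Real.sqrt (R ^ 2 - R₀ ^ 2) by positivity), hd2, hcs]
  -- coordinates
  set p : ℝ := inner ℝ x (u 0) with hp
  set q : ℝ := inner ℝ x (u 1) with hq
  set r : ℝ := inner ℝ x (u 2) with hr
  have hsum0 : p + q + r = 0 := by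
    rw [hp, hq, hr, ← inner_add_right, ← inner_add_right, hV0, inner_zero_right]
  -- orthonormal basis
  have h3pos : (0:ℝ) < Real.sqrt 3 := Real.sqrt_pos.mpr (by norm_num)
  have h30 : Real.sqrt 3 ≠ 0 := ne_of_gt h3pos
  have h3s : Real.sqrt 3 * Real.sqrt 3 = 3 := Real.mul_self_sqrt (by norm_num)
  set b : Fin 3 → EuclideanSpace ℝ (Fin 3) :=
    ![R⁻¹ • y, ℓ⁻¹ • u 0, (ℓ * Real.sqrt 3)⁻¹ • (u 0 + (2:ℝ) • u 1)] with hb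
  have hb0 : b 0 = R⁻¹ • y := rfl
  have hb1 : b 1 = ℓ⁻¹ • u 0 := rfl
  have hb2 : b 2 = (ℓ * Real.sqrt 3)⁻¹ • (u 0 + (2:ℝ) • u 1) := rfl
  have i00 : (inner ℝ (b 0) (b 0) : ℝ) = 1 := by
    rw [hb0, real_inner_smul_left, real_inner_smul_right, hyy]; field_simp
  have i01 : (inner ℝ (b 0) (b 1) : ℝ) = 0 := by
    rw [hb0, hb1, real_inner_smul_left, real_inner_smul_right, hyu 0]; ring
  have i02 : (inner ℝ (b 0) (b 2) : ℝ) = 0 := by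
    rw [hb0, hb2, real_inner_smul_left, real_inner_smul_right, inner_add_right,
      real_inner_smul_right, hyu 0, hyu 1]; ring
  have i10 : (inner ℝ (b 1) (b 0) : ℝ) = 0 := by rw [real_inner_comm]; exact i01
  have i11 : (inner ℝ (b 1) (b 1) : ℝ) = 1 := by
    rw [hb1, real_inner_smul_left, real_inner_smul_right, huu 0]; field_simp
  have i12 : (inner ℝ (b 1) (b 2) : ℝ) = 0 := by
    rw [hb1, hb2, real_inner_smul_left, real_inner_smul_right, inner_add_right,
      real_inner_smul_right, huu 0, huu' 0 1 (by decide)]; ring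
  have i20 : (inner ℝ (b 2) (b 0) : ℝ) = 0 := by rw [real_inner_comm]; exact i02
  have i21 : (inner ℝ (b 2) (b 1) : ℝ) = 0 := by rw [real_inner_comm]; exact i12
  have iww : (inner ℝ (u 0 + (2:ℝ) • u 1) (u 0 + (2:ℝ) • u 1) : ℝ) = 3 * ℓ ^ 2 := by
    rw [inner_add_left, inner_add_right, inner_add_right, real_inner_smul_left,
      real_inner_smul_left, real_inner_smul_right, real_inner_smul_right,
      huu 0, huu 1, huu' 0 1 (by decide), huu' 1 0 (by decide)]
    ring
  have hms : (ℓ * Real.sqrt 3) * (ℓ * Real.sqrt 3) = 3 * ℓ ^ 2 := by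
    linear_combination (ℓ ^ 2) * h3s
  have i22 : (inner ℝ (b 2) (b 2) : ℝ) = 1 := by
    rw [hb2, real_inner_smul_left, real_inner_smul_right, iww, ← mul_assoc, ← mul_inv, hms]
    exact inv_mul_cancel₀ (by positivity)
  have horth : Orthonormal ℝ b := by
    rw [orthonormal_iff_ite]
    intro i j
    fin_cases i <;> fin_cases j <;>
      simp [i00, i01, i02, i10, i11, i12, i20, i21, i22,
        (by rw [norm_eq_sqrt_real_inner, i00, Real.sqrt_one] : ‖b 0‖ = 1),
        (by rw [norm_eq_sqrt_real_inner, i11, Real.sqrt_one] : ‖b 1‖ = 1),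
        (by rw [norm_eq_sqrt_real_inner, i22, Real.sqrt_one] : ‖b 2‖ = 1)]
  have hspan : ⊤ ≤ Submodule.span ℝ (Set.range b) := by
    rw [horth.linearIndependent.span_eq_top_of_card_eq_finrank
      (by simp [finrank_euclideanSpace_fin])]
  set B : OrthonormalBasis (Fin 3) ℝ (EuclideanSpace ℝ (Fin 3)) := OrthonormalBasis.mk horth hspan
    with hB
  have hBc : ∀ i, B i = b i := fun i => by rw [hB, OrthonormalBasis.coe_mk]
  have hx0 : (inner ℝ x (b 0) : ℝ) = R⁻¹ * s := by rw [hb0, real_inner_smul_right, hxy]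
  have hx1 : (inner ℝ x (b 1) : ℝ) = ℓ⁻¹ * p := by rw [hb1, real_inner_smul_right, hp]
  have hx2 : (inner ℝ x (b 2) : ℝ) = (ℓ * Real.sqrt 3)⁻¹ * (p + 2 * q) := by
    rw [hb2, real_inner_smul_right, inner_add_right, real_inner_smul_right, ← hp, ← hq]
  have hx0c : (inner ℝ (b 0) x : ℝ) = R⁻¹ * s := by rw [real_inner_comm]; exact hx0
  have hx1c : (inner ℝ (b 1) x : ℝ) = ℓ⁻¹ * p := by rw [real_inner_comm]; exact hx1
  have hx2c : (inner ℝ (b 2) x : ℝ) = (ℓ * Real.sqrt 3)⁻¹ * (p + 2 * q) := by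
    rw [real_inner_comm]; exact hx2
  have hpars2 : (R⁻¹ * s) ^ 2 + (ℓ⁻¹ * p) ^ 2
      + ((ℓ * Real.sqrt 3)⁻¹ * (p + 2 * q)) ^ 2 = R ^ 2 := by
    have h := B.sum_inner_mul_inner x x
    rw [Fin.sum_univ_three, hBc 0, hBc 1, hBc 2, hx0c, hx1c, hx2c, hx0, hx1, hx2, hxx] at h
    linear_combination h
  have hpoly : 3 * ℓ ^ 2 * s ^ 2 + 3 * R ^ 2 * p ^ 2 + R ^ 2 * (p + 2 * q) ^ 2
      = 3 * R ^ 4 * ℓ ^ 2 := by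
    have e : ((ℓ * Real.sqrt 3)⁻¹) ^ 2 = (3 * ℓ ^ 2)⁻¹ := by
      rw [← hms, pow_two, mul_inv (ℓ * Real.sqrt 3) (ℓ * Real.sqrt 3)]
    rw [mul_pow, mul_pow, mul_pow, e, inv_pow, inv_pow] at hpars2
    have c1 : R ^ 2 * (R ^ 2)⁻¹ = 1 := mul_inv_cancel₀ (pow_ne_zero 2 hR0)
    have c2 : ℓ ^ 2 * (ℓ ^ 2)⁻¹ = 1 := mul_inv_cancel₀ (pow_ne_zero 2 hℓ0)
    have c3 : (3 * ℓ ^ 2) * (3 * ℓ ^ 2)⁻¹ = 1 := by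
      refine mul_inv_cancel₀ (by positivity)
    linear_combination (3 * R ^ 2 * ℓ ^ 2) * hpars2 - (3 * ℓ ^ 2 * s ^ 2) * c1
      - (3 * R ^ 2 * p ^ 2) * c2 - (R ^ 2 * (p + 2 * q) ^ 2) * c3
  clear_value s p q r B
  clear hB hBc hb0 hb1 hb2 i00 i01 i02 i10 i11 i12 i20 i21 i22 hx0 hx1 hx2 hx0c hx1c hx2c B horth
  clear hspan hb iww b hms hpars2 hVV hV0 huu huu' huy hyu hunorm
  -- key claim
  have key : R ^ 2 + s ≤ p ∨ R ^ 2 + s ≤ q ∨ R ^ 2 + s ≤ r := by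
    by_contra hcon
    push_neg at hcon
    obtain ⟨h0, h1, h2⟩ := hcon
    set K : ℝ := R ^ 2 + s with hK
    have hKpos : 0 < K := by linarith
    have hA : p ^ 2 + q ^ 2 + r ^ 2 < 6 * K ^ 2 := by
      have P0 : 0 < (K - p) * (2 * K + p) :=
        mul_pos (sub_pos.mpr h0) (show (0:ℝ) < 2 * K + p by linarith)
      have P1 : 0 < (K - q) * (2 * K + q) :=
        mul_pos (sub_pos.mpr h1) (show (0:ℝ) < 2 * K + q by linarith)
      have P2 : 0 < (K - r) * (2 * K + r) :=
        mul_pos (sub_pos.mpr h2) (show (0:ℝ) < 2 * K + r by linarith)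
      have h4 : K * p + K * q + K * r = 0 := by linear_combination K * hsum0
      linarith only [P0, P1, P2, h4]
    have hQ : 2 * R ^ 2 * (p ^ 2 + q ^ 2 + r ^ 2) = 3 * ℓ ^ 2 * (R ^ 4 - s ^ 2) := by
      have hrr : r = -p - q := by linarith
      rw [hrr]; linear_combination hpoly
    have hRs : 0 < R ^ 2 - s := by linarith only [hslt, hcc]
    have hB2 : 4 * R ^ 2 * K ≤ ℓ ^ 2 * (R ^ 2 - s) := by
      have step1 : 4 * R₀ ^ 2 * R ^ 2 * (R ^ 2 - s) ≤ ℓ ^ 2 * (R ^ 2 - R₀ ^ 2) * (R ^ 2 - s) :=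
        mul_le_mul_of_nonneg_right hℓ2 hRs.le
      have step2 : 4 * R ^ 2 * K * (R ^ 2 - R₀ ^ 2) ≤ 4 * R₀ ^ 2 * R ^ 2 * (R ^ 2 - s) := by
        have hpos : (0:ℝ) ≤ (R * R * (R * R)) * (2 * R₀ ^ 2 - R ^ 2 - s) :=
          mul_nonneg (by positivity) (by linarith only [hslt])
        have hid : 4 * R₀ ^ 2 * R ^ 2 * (R ^ 2 - s) - 4 * R ^ 2 * K * (R ^ 2 - R₀ ^ 2)
            = 4 * ((R * R * (R * R)) * (2 * R₀ ^ 2 - R ^ 2 - s)) := by rw [hK]; ring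
        linarith only [hpos, hid]
      have step3 : 4 * R ^ 2 * K * (R ^ 2 - R₀ ^ 2) ≤ ℓ ^ 2 * (R ^ 2 - s) * (R ^ 2 - R₀ ^ 2) := by
        have hid : ℓ ^ 2 * (R ^ 2 - R₀ ^ 2) * (R ^ 2 - s) = ℓ ^ 2 * (R ^ 2 - s) * (R ^ 2 - R₀ ^ 2) := by
          ring
        linarith only [step1, step2, hid]
      exact le_of_mul_le_mul_right (by linarith [step3]) hcc
    have h5 : 4 * R ^ 2 * K * (3 * K) ≤ ℓ ^ 2 * (R ^ 2 - s) * (3 * K) :=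
      mul_le_mul_of_nonneg_right hB2 (by linarith : (0:ℝ) ≤ 3 * K)
    have h6 : 2 * R ^ 2 * (p ^ 2 + q ^ 2 + r ^ 2) < 2 * R ^ 2 * (6 * K ^ 2) :=
      mul_lt_mul_of_pos_left hA (show (0:ℝ) < 2 * R ^ 2 by positivity)
    have h7 : ℓ ^ 2 * (R ^ 2 - s) * (3 * K) = 3 * ℓ ^ 2 * (R ^ 4 - s ^ 2) := by rw [hK]; ring
    have h8 : 4 * R ^ 2 * K * (3 * K) = 2 * R ^ 2 * (6 * K ^ 2) := by ring
    linarith only [h5, h6, h7, h8, hQ]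
  -- conclude
  have hmem : ∀ j, R ^ 2 + s ≤ (inner ℝ x (u j) : ℝ) → x ∈ Splus R (z j) := by
    intro j hj
    refine ⟨hxR, ?_⟩
    have hz : z j = u j - y := by rw [hu j]; abel
    rw [hz]
    have hre : (inner ℝ x (u j - y - x) : ℝ) = (inner ℝ x (u j) : ℝ) - s - R ^ 2 := by
      rw [inner_sub_right, inner_sub_right, hxx, hxy]
    rw [hre]
    linarith
  rcases key with h | h | h
  · rw [hp] at h; exact Or.inl (Or.inl (hmem 0 h))
  · rw [hq] at h; exact Or.inl (Or.inr (hmem 1 h))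
  · rw [hr] at h; exact Or.inr (hmem 2 h)
end

section
/- Let R > 0, let S = {x ∈ ℝ³ : |x| = R}, let y ∈ S, and let z ∈ ℝ³ satisfy z·y = −R² (i.e., z lies on the tangent plane of S at −y) and |z + y| = ℓ. If ℓ > R√8, then for every x ∈ S one has |x − z| > |x − y|. (Key inequality in the proof of Theorem 1: the difference |x−z⁽ʲ⁾(y)| − |x−y| is strictly positive.) -/
/-- Key inequality in the proof of Theorem 1: if `y ∈ S`, `z` lies on the tangent plane of
`S` at `−y` with `|z + y| = ℓ`, and `ℓ > R√8`, then `|x − z| > |x − y|` for every `x ∈ S`. -/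
theorem stmt1 (R ℓ : ℝ) (hR : 0 < R)
    (y z : EuclideanSpace ℝ (Fin 3)) (hy : ‖y‖ = R)
    (htangent : (inner ℝ z y : ℝ) = -R ^ 2) (hdist : ‖z + y‖ = ℓ)
    (hℓ : ℓ > R * Real.sqrt 8) :
    ∀ x : EuclideanSpace ℝ (Fin 3), ‖x‖ = R → ‖x - z‖ > ‖x - y‖ := by
  intro x hx
  have hℓ0 : 0 < ℓ := lt_of_le_of_lt (by positivity) hℓ
  have h8 : Real.sqrt 8 * Real.sqrt 8 = 8 := Real.mul_self_sqrt (by norm_num)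
  have hℓ2 : ℓ ^ 2 > 8 * R ^ 2 := by
    have h := mul_lt_mul'' hℓ hℓ (by positivity) (by positivity)
    nlinarith [h]
  have hzadd := @norm_add_sq_real (EuclideanSpace ℝ (Fin 3)) _ _ z y
  rw [hdist, hy, htangent] at hzadd
  have hz2 : ‖z‖ ^ 2 = ℓ ^ 2 + R ^ 2 := by nlinarith [hzadd]
  have hzsub := @norm_sub_sq_real (EuclideanSpace ℝ (Fin 3)) _ _ z y
  rw [hy, htangent, hz2] at hzsub
  -- hzsub : ‖z - y‖ ^ 2 = ℓ ^ 2 + R ^ 2 - 2 * (-R^2) + R ^ 2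
  have hzy2 : ‖z - y‖ ^ 2 = ℓ ^ 2 + 4 * R ^ 2 := by nlinarith [hzsub]
  have ha0 : (0:ℝ) ≤ ‖z - y‖ := norm_nonneg _
  have hkey : 2 * R * ‖z - y‖ < ℓ ^ 2 := by
    have hsq : (2 * R * ‖z - y‖) ^ 2 < (ℓ ^ 2) ^ 2 := by
      nlinarith [mul_pos (sub_pos.2 hℓ2) (pow_pos hℓ0 2),
        mul_lt_mul_of_pos_left hℓ2 (show (0:ℝ) < 4 * R ^ 2 by positivity)]
    exact lt_of_pow_lt_pow_left₀ 2 (by positivity) hsq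
  have hinner : (inner ℝ x (z - y) : ℝ) ≤ R * ‖z - y‖ := by
    have := real_inner_le_norm x (z - y)
    rwa [hx] at this
  have hx1 := @norm_sub_sq_real (EuclideanSpace ℝ (Fin 3)) _ _ x z
  have hx2 := @norm_sub_sq_real (EuclideanSpace ℝ (Fin 3)) _ _ x y
  have hir : (inner ℝ x (z - y) : ℝ) = inner ℝ x z - inner ℝ x y := inner_sub_right x z y
  have hsqlt : ‖x - y‖ ^ 2 < ‖x - z‖ ^ 2 := by
    rw [hx1, hx2, hx, hy, hz2]
    nlinarith [hinner, hir, hkey]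
  exact lt_of_pow_lt_pow_left₀ 2 (norm_nonneg _) hsqlt
end

section
/- Let 0 < R₀ < R with R > √2·R₀, let S = {x ∈ ℝ³ : |x| = R}, let y ∈ S, and let λ ≥ R²/(R² − 2R₀²). Then for the single auxiliary point z = −λy one has S*(y) ⊆ S₊(z). (Remark 1 of the paper, with the corrected constant in the lower bound for λ.) -/
/-- Remark 1 (with corrected constant): if `R > √2·R₀` and `λ ≥ R²/(R² − 2R₀²)`, then for the
single auxiliary point `z = −λy` one has `S*(y) ⊆ S₊(z)`. -/
theorem stmt3 (R R₀ lam : ℝ) (hR₀ : 0 < R₀) (hR : R₀ < R)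
    (hR' : R > Real.sqrt 2 * R₀)
    (y : EuclideanSpace ℝ (Fin 3)) (hy : ‖y‖ = R)
    (hlam : lam ≥ R ^ 2 / (R ^ 2 - 2 * R₀ ^ 2)) :
    Sstar R R₀ y ⊆ Splus R (-lam • y) := by
  intro x hx
  obtain ⟨hxR, hlt⟩ := hx
  set t : ℝ := inner ℝ x y with ht
  have hR2 : 2 * R₀ ^ 2 < R ^ 2 := by
    have h2 : Real.sqrt 2 * R₀ ≥ 0 := by positivity
    nlinarith [Real.sq_sqrt (by norm_num : (2:ℝ) ≥ 0)]
  have hd : 0 < R ^ 2 - 2 * R₀ ^ 2 := by linarith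
  have hinner : (inner ℝ (-y) (x - y) : ℝ) = R ^ 2 - t := by
    rw [inner_neg_left, inner_sub_right, real_inner_self_eq_norm_sq, hy, ht,
      real_inner_comm]
    ring
  rw [hinner] at hlt
  have hnorm : ‖x - y‖ ^ 2 = 2 * R ^ 2 - 2 * t := by
    rw [norm_sub_sq_real, hxR, hy]; ring
  have hpos : 0 < R ^ 2 - t := lt_of_le_of_lt (by positivity) hlt
  have hsq : (‖x - y‖ * Real.sqrt (R ^ 2 - R₀ ^ 2)) ^ 2 < (R ^ 2 - t) ^ 2 := by
    apply sq_lt_sq' _ hlt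
    nlinarith [mul_nonneg (norm_nonneg (x - y)) (Real.sqrt_nonneg (R ^ 2 - R₀ ^ 2))]
  have hsqrt : Real.sqrt (R ^ 2 - R₀ ^ 2) ^ 2 = R ^ 2 - R₀ ^ 2 :=
    Real.sq_sqrt (by nlinarith)
  have ht' : t < 2 * R₀ ^ 2 - R ^ 2 := by
    rw [mul_pow, hsqrt, hnorm] at hsq
    nlinarith
  have hlam' : lam * (R ^ 2 - 2 * R₀ ^ 2) ≥ R ^ 2 := by
    rw [ge_iff_le, div_le_iff₀ hd] at hlam
    linarith
  have hlampos : 0 < lam := by nlinarith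
  refine ⟨hxR, ?_⟩
  have : (inner ℝ x (-lam • y - x) : ℝ) = -lam * t - R ^ 2 := by
    rw [inner_sub_right, inner_smul_right, real_inner_self_eq_norm_sq, hxR]
    try ring
  rw [this]
  nlinarith [mul_lt_mul_of_pos_left ht' hlampos]
end

section
/- Let R > 0 and ℓ > 0, and set z⁽¹⁾ = (ℓ√3/2, ℓ/2, R) and z⁽²⁾ = (−ℓ√3/2, ℓ/2, R) (the points z = (ℓcos φ, ℓsin φ, R) with φ = π/6 and φ = 5π/6). Then every ξ ∈ S with ξ₂ ≥ |ξ₁|/√3 and ξ₃ ≥ R − 2Rℓ²/(4R² + ℓ²) belongs to S₊(z⁽¹⁾) ∪ S₊(z⁽²⁾). (The inclusion S₁₂(ℓ) ⊆ S₊(z⁽¹⁾) ∪ S₊(z⁽²⁾) from the proof of Lemma 1, where S₁₂(ℓ) is the piece of S bounded by the meridional semi-planes φ = π/6, φ = 5π/6 and the plane ξ₃ = ξ₃* = R − 2Rℓ²/(4R²+ℓ²).) -/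
lemma key_ineq (R ℓ a b c : ℝ) (hR : 0 < R) (hℓ : 0 < ℓ)
    (hnorm : a ^ 2 + b ^ 2 + c ^ 2 = R ^ 2) (ha : 0 ≤ a)
    (hb : a / Real.sqrt 3 ≤ b)
    (hc : R - 2 * R * ℓ ^ 2 / (4 * R ^ 2 + ℓ ^ 2) ≤ c) :
    R ^ 2 ≤ ℓ * Real.sqrt 3 / 2 * a + ℓ / 2 * b + R * c := by
  have h3 : (0:ℝ) < Real.sqrt 3 := Real.sqrt_pos.2 (by norm_num)
  have hsq3 : Real.sqrt 3 ^ 2 = 3 := Real.sq_sqrt (by norm_num)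
  have hb0 : 0 ≤ b := le_trans (by positivity) hb
  have hsab : 0 ≤ Real.sqrt 3 * a + b := by positivity
  have hcR : c ≤ R := by nlinarith [sq_nonneg a, sq_nonneg b, sq_nonneg (R + c)]
  have hD : (0:ℝ) < 4 * R ^ 2 + ℓ ^ 2 := by positivity
  have hdiv : 2 * R * ℓ ^ 2 / (4 * R ^ 2 + ℓ ^ 2) * (4 * R ^ 2 + ℓ ^ 2) = 2 * R * ℓ ^ 2 := by
    field_simp
  have hc' : 4 * R ^ 2 * (R - c) ≤ ℓ ^ 2 * (R + c) := by nlinarith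
  have hRc2 : 0 ≤ R ^ 2 - c ^ 2 := by nlinarith [sq_nonneg a, sq_nonneg b]
  set t := Real.sqrt (R ^ 2 - c ^ 2) with ht
  have ht0 : 0 ≤ t := Real.sqrt_nonneg _
  have ht2 : t ^ 2 = R ^ 2 - c ^ 2 := Real.sq_sqrt hRc2
  -- step 1 : t ≤ √3 a + b
  have hab3 : 0 ≤ a * b := mul_nonneg ha hb0
  have step1 : t ≤ Real.sqrt 3 * a + b := by
    have h1 : R ^ 2 - c ^ 2 ≤ (Real.sqrt 3 * a + b) ^ 2 := by nlinarith
    calc t ≤ Real.sqrt ((Real.sqrt 3 * a + b) ^ 2) := Real.sqrt_le_sqrt h1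
      _ = Real.sqrt 3 * a + b := Real.sqrt_sq hsab
  -- step 2 : R (R - c) ≤ (ℓ/2) t
  have step2 : R * (R - c) ≤ ℓ / 2 * t := by
    have h2 : (R * (R - c)) ^ 2 ≤ (ℓ / 2 * t) ^ 2 := by nlinarith [mul_nonneg (sub_nonneg.2 hcR) (sub_nonneg.2 hc')]
    calc R * (R - c) = Real.sqrt ((R * (R - c)) ^ 2) :=
          (Real.sqrt_sq (mul_nonneg hR.le (sub_nonneg.2 hcR))).symm
      _ ≤ Real.sqrt ((ℓ / 2 * t) ^ 2) := Real.sqrt_le_sqrt h2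
      _ = ℓ / 2 * t := Real.sqrt_sq (by positivity)
  nlinarith [mul_le_mul_of_nonneg_left step1 (by positivity : (0:ℝ) ≤ ℓ / 2)]

/-- The inclusion `S₁₂(ℓ) ⊆ S₊(z⁽¹⁾) ∪ S₊(z⁽²⁾)` from the proof of Lemma 1, with
`z⁽¹⁾ = (ℓ√3/2, ℓ/2, R)`, `z⁽²⁾ = (−ℓ√3/2, ℓ/2, R)`: every `ξ ∈ S` with `ξ₂ ≥ |ξ₁|/√3` and
`ξ₃ ≥ R − 2Rℓ²/(4R² + ℓ²)` belongs to `S₊(z⁽¹⁾) ∪ S₊(z⁽²⁾)`. -/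
theorem stmt10 (R ℓ : ℝ) (hR : 0 < R) (hℓ : 0 < ℓ)
    (z₁ z₂ : EuclideanSpace ℝ (Fin 3))
    (hz₁ : z₁ = (WithLp.equiv 2 (Fin 3 → ℝ)).symm ![ℓ * Real.sqrt 3 / 2, ℓ / 2, R])
    (hz₂ : z₂ = (WithLp.equiv 2 (Fin 3 → ℝ)).symm ![-(ℓ * Real.sqrt 3 / 2), ℓ / 2, R]) :
    ∀ ξ : EuclideanSpace ℝ (Fin 3), ‖ξ‖ = R →
      ξ 1 ≥ |ξ 0| / Real.sqrt 3 →
      ξ 2 ≥ R - 2 * R * ℓ ^ 2 / (4 * R ^ 2 + ℓ ^ 2) →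
      ξ ∈ Splus R z₁ ∪ Splus R z₂ := by
  intro ξ hnorm h1 h2
  have hn : ξ 0 ^ 2 + ξ 1 ^ 2 + ξ 2 ^ 2 = R ^ 2 := by
    have h := hnorm
    rw [EuclideanSpace.norm_eq] at h
    have h' : (∑ i : Fin 3, ‖ξ i‖ ^ 2) = R ^ 2 := by
      rw [← h, Real.sq_sqrt (by positivity)]
    simpa [Fin.sum_univ_three, sq_abs] using h'
  have hself : (inner ℝ ξ ξ : ℝ) = R ^ 2 := by
    rw [real_inner_self_eq_norm_sq, hnorm]
  rcases le_or_gt 0 (ξ 0) with h0 | h0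
  · left
    refine ⟨hnorm, ?_⟩
    rw [inner_sub_right, hself]
    have hiz : (inner ℝ ξ z₁ : ℝ) = ℓ * Real.sqrt 3 / 2 * ξ 0 + ℓ / 2 * ξ 1 + R * ξ 2 := by
      rw [hz₁]
      simp [PiLp.inner_apply, RCLike.inner_apply, Fin.sum_univ_three]
    rw [hiz]
    have := key_ineq R ℓ (ξ 0) (ξ 1) (ξ 2) hR hℓ hn h0
      (by rwa [abs_of_nonneg h0] at h1) h2
    linarith
  · right
    refine ⟨hnorm, ?_⟩
    rw [inner_sub_right, hself]
    have hiz : (inner ℝ ξ z₂ : ℝ) = ℓ * Real.sqrt 3 / 2 * (-ξ 0) + ℓ / 2 * ξ 1 + R * ξ 2 := by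
      rw [hz₂]
      simp [PiLp.inner_apply, RCLike.inner_apply, Fin.sum_univ_three]
    rw [hiz]
    have := key_ineq R ℓ (-ξ 0) (ξ 1) (ξ 2) hR hℓ (by ring_nf; ring_nf at hn; linarith)
      (by linarith) (by rwa [abs_of_neg h0] at h1) h2
    linarith
end

section
/- Let R > 0 and ℓ > 0, and set z⁽¹⁾ = (ℓ√3/2, ℓ/2, R), z⁽²⁾ = (−ℓ√3/2, ℓ/2, R), z⁽³⁾ = (0, −ℓ, R) (the points z = (ℓcos φ, ℓsin φ, R) with φ = π/6, 5π/6, 3π/2, which form an equilateral triangle on the tangent plane of S at (0,0,R)). Then the spherical cap S(ℓ) = {ξ ∈ ℝ³ : |ξ| = R, ξ₃ ≥ R − 2Rℓ²/(4R² + ℓ²)} satisfies S(ℓ) ⊆ S₊(z⁽¹⁾) ∪ S₊(z⁽²⁾) ∪ S₊(z⁽³⁾). (The covering of the cap S(ℓ) by the three illuminated regions, from the proof of Lemma 1.) -/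
set_option maxHeartbeats 1000000


/-- Covering of the spherical cap `S(ℓ) = {ξ : |ξ| = R, ξ₃ ≥ R − 2Rℓ²/(4R² + ℓ²)}` by the
three illuminated regions `S₊(z⁽ʲ⁾)`, where `z⁽¹⁾ = (ℓ√3/2, ℓ/2, R)`,
`z⁽²⁾ = (−ℓ√3/2, ℓ/2, R)`, `z⁽³⁾ = (0, −ℓ, R)` form an equilateral triangle on the tangent
plane of `S` at `(0,0,R)`. (From the proof of Lemma 1.) -/
theorem stmt11 (R ℓ : ℝ) (hR : 0 < R) (hℓ : 0 < ℓ)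
    (z₁ z₂ z₃ : EuclideanSpace ℝ (Fin 3))
    (hz₁ : z₁ = (WithLp.equiv 2 (Fin 3 → ℝ)).symm ![ℓ * Real.sqrt 3 / 2, ℓ / 2, R])
    (hz₂ : z₂ = (WithLp.equiv 2 (Fin 3 → ℝ)).symm ![-(ℓ * Real.sqrt 3 / 2), ℓ / 2, R])
    (hz₃ : z₃ = (WithLp.equiv 2 (Fin 3 → ℝ)).symm ![0, -ℓ, R]) :
    {ξ : EuclideanSpace ℝ (Fin 3) | ‖ξ‖ = R ∧ ξ 2 ≥ R - 2 * R * ℓ ^ 2 / (4 * R ^ 2 + ℓ ^ 2)}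
      ⊆ Splus R z₁ ∪ Splus R z₂ ∪ Splus R z₃ := by
  intro ξ hξ
  obtain ⟨hn, ht⟩ := hξ
  have hD : (0:ℝ) < 4 * R ^ 2 + ℓ ^ 2 := by positivity
  set s := Real.sqrt 3 with hsdef
  have hs : s ^ 2 = 3 := Real.sq_sqrt (by norm_num)
  have hs0 : 0 ≤ s := Real.sqrt_nonneg 3
  set a := ξ 0 with hadef
  set b := ξ 1 with hbdef
  set t := ξ 2 with htdef
  have hsum : a ^ 2 + b ^ 2 + t ^ 2 = R ^ 2 := by
    have h1 : (inner ℝ ξ ξ : ℝ) = ‖ξ‖ ^ 2 := real_inner_self_eq_norm_sq ξ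
    simp only [PiLp.inner_apply, RCLike.inner_apply, conj_trivial, Fin.sum_univ_three] at h1
    rw [hn] at h1
    nlinarith [h1]
  have hi1 : (inner ℝ ξ (z₁ - ξ) : ℝ) = ℓ * s / 2 * a + ℓ / 2 * b + R * t - R ^ 2 := by
    rw [inner_sub_right, real_inner_self_eq_norm_sq, hn, hz₁]
    simp [PiLp.inner_apply, RCLike.inner_apply, Fin.sum_univ_three,
      WithLp.equiv_symm_apply, ← hadef, ← hbdef, ← htdef]
  have hi2 : (inner ℝ ξ (z₂ - ξ) : ℝ) = -(ℓ * s / 2) * a + ℓ / 2 * b + R * t - R ^ 2 := by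
    rw [inner_sub_right, real_inner_self_eq_norm_sq, hn, hz₂]
    simp [PiLp.inner_apply, RCLike.inner_apply, Fin.sum_univ_three,
      WithLp.equiv_symm_apply, ← hadef, ← hbdef, ← htdef]
  have hi3 : (inner ℝ ξ (z₃ - ξ) : ℝ) = -ℓ * b + R * t - R ^ 2 := by
    rw [inner_sub_right, real_inner_self_eq_norm_sq, hn, hz₃]
    simp [PiLp.inner_apply, RCLike.inner_apply, Fin.sum_univ_three,
      WithLp.equiv_symm_apply, ← hadef, ← hbdef, ← htdef]
  set r := Real.sqrt (a ^ 2 + b ^ 2) with hrdef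
  have hr0 : 0 ≤ r := Real.sqrt_nonneg _
  have hr2 : r ^ 2 = a ^ 2 + b ^ 2 := Real.sq_sqrt (by positivity)
  have htR : t ≤ R := by nlinarith [sq_nonneg a, sq_nonneg b]
  have ht' : (R - t) * (4 * R ^ 2 + ℓ ^ 2) ≤ 2 * R * ℓ ^ 2 := by
    have h1 : R - t ≤ 2 * R * ℓ ^ 2 / (4 * R ^ 2 + ℓ ^ 2) := by linarith
    exact (le_div_iff₀ hD).mp h1
  have hlin : 4 * R ^ 2 * (R - t) ≤ ℓ ^ 2 * (R + t) := by ring_nf at ht' ⊢; linarith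
  have hkey2 : (2 * R * (R - t)) ^ 2 ≤ (ℓ * r) ^ 2 := by
    have hmul := mul_le_mul_of_nonneg_right hlin (by linarith : (0:ℝ) ≤ R - t)
    have e1 : (ℓ * r) ^ 2 = ℓ ^ 2 * (R ^ 2 - t ^ 2) := by
      linear_combination ℓ ^ 2 * hr2 + ℓ ^ 2 * hsum
    calc (2 * R * (R - t)) ^ 2 = 4 * R ^ 2 * (R - t) * (R - t) := by ring
      _ ≤ ℓ ^ 2 * (R + t) * (R - t) := hmul
      _ = ℓ ^ 2 * (R ^ 2 - t ^ 2) := by ring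
      _ = (ℓ * r) ^ 2 := e1.symm
  have hlr : 2 * R * (R - t) ≤ ℓ * r := by
    have hy0 : 0 ≤ 2 * R * (R - t) := by nlinarith
    have hx0 : 0 ≤ ℓ * r := by positivity
    calc 2 * R * (R - t) = Real.sqrt ((2 * R * (R - t)) ^ 2) := (Real.sqrt_sq hy0).symm
      _ ≤ Real.sqrt ((ℓ * r) ^ 2) := Real.sqrt_le_sqrt hkey2
      _ = ℓ * r := Real.sqrt_sq hx0
  by_cases hb3 : r ≤ -2 * b
  · right
    refine ⟨hn, ?_⟩
    rw [hi3]
    nlinarith [mul_le_mul_of_nonneg_left hb3 hℓ.le, hlr]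
  · push_neg at hb3
    have hble : b ≤ r := by nlinarith [sq_nonneg a]
    have hr2b : 0 ≤ r + 2 * b := by linarith
    by_cases ha0 : 0 ≤ a
    · left; left
      refine ⟨hn, ?_⟩
      rw [hi1]
      have hproj : r ≤ s * a + b := by
        nlinarith [hs, hr2, mul_nonneg hs0 ha0,
          mul_nonneg (sub_nonneg.2 hble) hr2b, sq_nonneg (s * a - r + b)]
      nlinarith [mul_le_mul_of_nonneg_left hproj hℓ.le, hlr]
    · push_neg at ha0
      left; right
      refine ⟨hn, ?_⟩
      rw [hi2]
      have hproj : r ≤ s * (-a) + b := by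
        nlinarith [hs, hr2, mul_nonneg hs0 (by linarith : (0:ℝ) ≤ -a),
          mul_nonneg (sub_nonneg.2 hble) hr2b, sq_nonneg (s * (-a) - r + b)]
      nlinarith [mul_le_mul_of_nonneg_left hproj hℓ.le, hlr]
end
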